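/- More generally, for all c : ℝ, d : Delta, and v : Fin n → ℝ, eval₃ c d v = v + c • eval₁ d, i.e., the scale-pushing reverse evaluator adds c times the gradient vector represented by d to the accumulator. -/
import Mathlib

inductive Delta (n : ℕ) : Type where
  | zero : Delta n
  | input : Fin n → Delta n
  | add : Delta n → Delta n → Delta n
  | scale : ℝ → Delta n → Delta n

noncomputable def eval₁ {n : ℕ} : Delta n → (Fin n → ℝ)
  | .zero => 0
  | .input i => Pi.single i 1
  | .add d₁ d₂ => eval₁ d₁ + eval₁ d₂
  | .scale r d => r • eval₁ d

noncomputable def eval₃ {n : ℕ} : ℝ → Delta n → (Fin n → ℝ) → (Fin n → ℝ)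
  | _, .zero => id
  | c, .input i => fun tg => Function.update tg i (tg i + c)
  | c, .add d₁ d₂ => eval₃ c d₂ ∘ eval₃ c d₁
  | c, .scale r d => eval₃ (c * r) d

theorem eval₃_eq_add_smul_eval₁ {n : ℕ} (c : ℝ) (d : Delta n) (v : Fin n → ℝ) :
    eval₃ c d v = v + c • eval₁ d := by
  induction d generalizing c v with
  | zero => simp [eval₃, eval₁]
  | input i =>
    funext j
    simp only [eval₃, eval₁, Pi.add_apply, Pi.smul_apply]
    rcases eq_or_ne j i with rfl | h
    · simp
    · simp [Function.update_of_ne h, Pi.single_eq_of_ne h]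
  | add d₁ d₂ ih₁ ih₂ =>
    simp [eval₃, eval₁, ih₁, ih₂, smul_add]
    ring_nf
  | scale r d ih =>
    simp [eval₃, eval₁, ih, mul_smul]
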